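/- arXiv:2101.08619 — 6 statements merged into one kernel-verified Lean document; each statement's English description precedes it below -/
import Mathlib

section
/- For signed graphs (G,σ) and (H,π), (G,σ) admits a homomorphism to (H,π) if and only if (G,σ) admits an edge-sign preserving homomorphism to the double switching graph DSG(H,π). -/
open SimpleGraph

/-- The sign of a walk in a signed graph `(G, σ)`: the product of the signs of its edges,
counted with multiplicity. -/
def walkSign {V : Type*} {G : SimpleGraph V} (σ : Sym2 V → ℤˣ) {u v : V}
    (w : G.Walk u v) : ℤˣ :=
  (w.edges.map σ).prod

/-- A homomorphism of signed graphs: a graph homomorphism which preserves the signs of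
closed walks. -/
def IsSignedHom {U V : Type*} (G : SimpleGraph U) (σ : Sym2 U → ℤˣ)
    (H : SimpleGraph V) (π : Sym2 V → ℤˣ) (f : G →g H) : Prop :=
  ∀ (u : U) (w : G.Walk u u), walkSign π (w.map f) = walkSign σ w

/-- `(G, σ)` admits a homomorphism to `(H, π)`. -/
def SignedHom {U V : Type*} (G : SimpleGraph U) (σ : Sym2 U → ℤˣ)
    (H : SimpleGraph V) (π : Sym2 V → ℤˣ) : Prop :=
  ∃ f : G →g H, IsSignedHom G σ H π f

/-- An edge-sign preserving homomorphism: a graph homomorphism `φ : G → H` with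
`π(φ(u)φ(v)) = σ(uv)` for every edge `uv` of `G`. -/
def IsESPHom {U V : Type*} (G : SimpleGraph U) (σ : Sym2 U → ℤˣ)
    (H : SimpleGraph V) (π : Sym2 V → ℤˣ) (f : G →g H) : Prop :=
  ∀ u v : U, G.Adj u v → π s(f u, f v) = σ s(u, v)

/-- `(G, σ)` admits an edge-sign preserving homomorphism to `(H, π)`. -/
def ESPHom {U V : Type*} (G : SimpleGraph U) (σ : Sym2 U → ℤˣ)
    (H : SimpleGraph V) (π : Sym2 V → ℤˣ) : Prop :=
  ∃ f : G →g H, IsESPHom G σ H π f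

/-- The underlying graph of the double switching graph `DSG(H, π)`: two copies `x⁺, x⁻` of each
vertex `x` (encoded as `(x, 1)` and `(x, -1)`), with `(x, s)` adjacent to `(y, t)` iff
`x` is adjacent to `y` in `H`. -/
def DSGGraph {V : Type*} (H : SimpleGraph V) : SimpleGraph (V × ℤˣ) where
  Adj a b := H.Adj a.1 b.1
  symm := ⟨fun _ _ h => H.adj_symm h⟩
  loopless := ⟨fun a h => H.irrefl h⟩

/-- The signature of the double switching graph `DSG(H, π)`: the edge from `(x, s)` to `(y, t)`
carries the sign `s * t * π(xy)`; i.e. edges between the two copies of `H` have the sign of the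
original edge, while crossing edges carry the opposite sign. -/
def DSGSign {V : Type*} (π : Sym2 V → ℤˣ) : Sym2 (V × ℤˣ) → ℤˣ :=
  Sym2.lift ⟨fun a b => a.2 * b.2 * π s(a.1, b.1), by
    intro a b
    dsimp only
    rw [Sym2.eq_swap, mul_comm a.2 b.2]⟩

/-!
A homomorphism of signed graphs is a graph homomorphism `f` such that `σ` and the pulled-back
signature `π ∘ f` give every closed walk the same sign. By Zaslavsky's theorem this happens
exactly when `σ` is obtained from `π ∘ f` by switching at some `ε : U → ℤˣ`, i.e.
`σ(uv) = ε(u) ε(v) π(f(u)f(v))` on every edge. Such an `ε` is precisely the second coordinate of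
an edge-sign preserving lift `u ↦ (f u, ε u)` of `f` to `DSG(H, π)`.
-/

/-- `σ` is obtained from `τ` by switching at the vertices where `ε = -1`. -/
def SwitchingEquiv {U : Type*} (G : SimpleGraph U) (σ τ : Sym2 U → ℤˣ) : Prop :=
  ∃ ε : U → ℤˣ, ∀ u v, G.Adj u v → σ s(u, v) = ε u * ε v * τ s(u, v)

section walkSign

variable {U V : Type*} {G : SimpleGraph U} (σ : Sym2 U → ℤˣ)

@[simp]
lemma walkSign_nil {u : U} : walkSign σ (Walk.nil : G.Walk u u) = 1 := rfl

@[simp]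
lemma walkSign_cons {u v w : U} (h : G.Adj u v) (p : G.Walk v w) :
    walkSign σ (Walk.cons h p) = σ s(u, v) * walkSign σ p := by
  simp [walkSign]

@[simp]
lemma walkSign_append {u v w : U} (p : G.Walk u v) (q : G.Walk v w) :
    walkSign σ (p.append q) = walkSign σ p * walkSign σ q := by
  simp [walkSign]

@[simp]
lemma walkSign_reverse {u v : U} (p : G.Walk u v) : walkSign σ p.reverse = walkSign σ p := by
  simp [walkSign, List.prod_reverse]

@[simp]
lemma walkSign_copy {u v u' v' : U} (p : G.Walk u v) (hu : u = u') (hv : v = v') :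
    walkSign σ (p.copy hu hv) = walkSign σ p := by
  subst hu hv; rfl

lemma walkSign_map {H : SimpleGraph V} (π : Sym2 V → ℤˣ) (f : G →g H) {u v : U}
    (w : G.Walk u v) : walkSign π (w.map f) = walkSign (π ∘ Sym2.map f) w := by
  simp [walkSign, Walk.edges_map]

end walkSign

namespace SwitchingEquiv

variable {U : Type*} {G : SimpleGraph U} {σ τ : Sym2 U → ℤˣ}

lemma walkSign_eq {ε : U → ℤˣ} (hε : ∀ u v, G.Adj u v → σ s(u, v) = ε u * ε v * τ s(u, v))
    {u v : U} (w : G.Walk u v) : walkSign σ w = ε u * ε v * walkSign τ w := by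
  induction w with
  | nil => simp [Int.units_mul_self]
  | @cons a b c h p ih =>
    calc walkSign σ (Walk.cons h p)
        = ε a * ε b * τ s(a, b) * (ε b * ε c * walkSign τ p) := by
          rw [walkSign_cons, hε a b h, ih]
      _ = ε a * ε c * (ε b * ε b) * (τ s(a, b) * walkSign τ p) := by ac_rfl
      _ = ε a * ε c * walkSign τ (Walk.cons h p) := by
          rw [Int.units_mul_self, mul_one, walkSign_cons]

/-- Zaslavsky's characterization of switching equivalence. -/
theorem iff_walkSign_eq :
    SwitchingEquiv G σ τ ↔ ∀ (u : U) (w : G.Walk u u), walkSign σ w = walkSign τ w := by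
  constructor
  · rintro ⟨ε, hε⟩ u w
    rw [walkSign_eq hε, Int.units_mul_self, one_mul]
  · intro h
    let root : U → U := fun u => (G.connectedComponentMk u).out
    have reach : ∀ u, G.Reachable (root u) u :=
      fun u => ConnectedComponent.exact (Quot.out_eq _)
    let p : ∀ u, G.Walk (root u) u := fun u => (reach u).some
    -- Switch at `u` iff `σ` and `τ` disagree on a fixed walk to `u` from the root of its component.
    refine ⟨fun u => walkSign σ (p u) * walkSign τ (p u), fun u v huv => ?_⟩
    have hroot : root v = root u := by
      simp only [root, ConnectedComponent.connectedComponentMk_eq_of_adj huv]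
    have hcycle := h _ ((p u).append (.cons huv ((p v).copy hroot rfl).reverse))
    simp only [walkSign_append, walkSign_cons, walkSign_reverse, walkSign_copy] at hcycle
    calc σ s(u, v)
        = walkSign σ (p u) * walkSign σ (p u) * σ s(u, v) *
            (walkSign σ (p v) * walkSign σ (p v)) := by
          simp only [Int.units_mul_self, one_mul, mul_one]
      _ = walkSign σ (p u) * (walkSign σ (p u) * (σ s(u, v) * walkSign σ (p v))) *
            walkSign σ (p v) := by ac_rfl
      _ = walkSign σ (p u) * (walkSign τ (p u) * (τ s(u, v) * walkSign τ (p v))) *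
            walkSign σ (p v) := by rw [hcycle]
      _ = walkSign σ (p u) * walkSign τ (p u) * (walkSign σ (p v) * walkSign τ (p v)) *
            τ s(u, v) := by ac_rfl

end SwitchingEquiv

def DSGGraph.fst {V : Type*} (H : SimpleGraph V) : DSGGraph H →g H where
  toFun := Prod.fst
  map_rel' h := h

lemma isSignedHom_iff_switchingEquiv {U V : Type*} (G : SimpleGraph U) (σ : Sym2 U → ℤˣ)
    (H : SimpleGraph V) (π : Sym2 V → ℤˣ) (f : G →g H) :
    IsSignedHom G σ H π f ↔ SwitchingEquiv G σ (π ∘ Sym2.map f) := by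
  simp only [IsSignedHom, SwitchingEquiv.iff_walkSign_eq, walkSign_map, eq_comm]

/-- `(G, σ)` admits a homomorphism to `(H, π)` iff `(G, σ)` admits an edge-sign preserving
homomorphism to the double switching graph `DSG(H, π)`. -/
theorem signedHom_iff_espHom_DSG {U V : Type*}
    (G : SimpleGraph U) (σ : Sym2 U → ℤˣ) (H : SimpleGraph V) (π : Sym2 V → ℤˣ) :
    SignedHom G σ H π ↔ ESPHom G σ (DSGGraph H) (DSGSign π) := by
  constructor
  · rintro ⟨f, hf⟩
    obtain ⟨ε, hε⟩ := (isSignedHom_iff_switchingEquiv G σ H π f).1 hf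
    exact ⟨⟨fun u => (f u, ε u), f.map_rel⟩, fun u v huv => (hε u v huv).symm⟩
  · rintro ⟨f, hf⟩
    refine ⟨(DSGGraph.fst H).comp f, (isSignedHom_iff_switchingEquiv ..).2 ?_⟩
    exact ⟨fun u => (f u).2, fun u v huv => (hf u v huv).symm⟩
end

section
/- Let (G,σ) be the signed graph with vertex set {u,v,w,x,y}, positive edges uv, uw, vw, ux, vx, wy and negative edge xy. Then mad(G) = 14/5 and (G,σ) admits no homomorphism to (K_6,M). In particular, there exists a signed graph with maximum average degree exactly 14/5 that does not admit a homomorphism to (K_6,M). -/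
open SimpleGraph

/-- The signature on the complete graph `K_n` (with `n` even, vertices `0, …, n-1`) whose
negative edges form the perfect matching `{01, 23, 45, …}`. For `n = 6` this is `(K_6, M)`
with negative edges `12, 34, 56`. -/
def matchSign (n : ℕ) : Sym2 (Fin n) → ℤˣ :=
  Sym2.lift ⟨fun a b => if (a : ℕ) / 2 = (b : ℕ) / 2 then -1 else 1, by
    intro a b
    simp only [eq_comm]⟩

/-- The tight example: the graph on vertices `u, v, w, x, y` (encoded as `0, 1, 2, 3, 4`) with
edges `uv, uw, vw, ux, vx, wy, xy`. -/
def tightGraph : SimpleGraph (Fin 5) :=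
  SimpleGraph.fromEdgeSet
    {s(0, 1), s(0, 2), s(1, 2), s(0, 3), s(1, 3), s(2, 4), s(3, 4)}

/-- The signature on `tightGraph` whose unique negative edge is `xy = {3, 4}`. -/
def tightSign : Sym2 (Fin 5) → ℤˣ :=
  fun e => if e = s((3 : Fin 5), (4 : Fin 5)) then -1 else 1

/-- Auxiliary: the edge set of `tightGraph` as a `Finset`. -/
def tightEdges : Finset (Sym2 (Fin 5)) :=
  {s(0, 1), s(0, 2), s(1, 2), s(0, 3), s(1, 3), s(2, 4), s(3, 4)}

lemma tight_edgeSet_eq : tightGraph.edgeSet = ↑tightEdges := by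
  rw [tightGraph, SimpleGraph.edgeSet_fromEdgeSet]
  ext e
  simp only [Set.mem_diff, Set.mem_insert_iff, Set.mem_singleton_iff, Set.mem_setOf_eq,
    Finset.coe_insert, Finset.mem_coe, tightEdges, Finset.mem_insert, Finset.mem_singleton]
  revert e
  decide

lemma tight_key : ∀ S : Finset (Fin 5),
    5 * (tightEdges.filter (fun e => ∀ v ∈ e, v ∈ S)).card ≤ 7 * S.card := by decide

lemma tight_adj : ∀ a b : Fin 5, s(a, b) ∈ tightEdges → a ≠ b → tightGraph.Adj a b := by
  intro a b hm hne
  rw [tightGraph, SimpleGraph.fromEdgeSet_adj]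
  refine ⟨?_, hne⟩
  simp only [Set.mem_insert_iff, Set.mem_singleton_iff]
  revert hm
  simp only [tightEdges, Finset.mem_insert, Finset.mem_singleton]
  exact id

lemma match_key : ∀ a0 a1 a2 a3 a4 : Fin 6, a0 ≠ a1 → a0 ≠ a2 → a1 ≠ a2 → a0 ≠ a3 →
    a1 ≠ a3 → a2 ≠ a4 → a3 ≠ a4 →
    matchSign 6 s(a0,a1) * (matchSign 6 s(a1,a2) * (matchSign 6 s(a2,a0) * 1)) = 1 →
    matchSign 6 s(a0,a1) * (matchSign 6 s(a1,a3) * (matchSign 6 s(a3,a0) * 1)) = 1 →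
    matchSign 6 s(a0,a2) * (matchSign 6 s(a2,a4) *
      (matchSign 6 s(a4,a3) * (matchSign 6 s(a3,a0) * 1))) = -1 →
    False := by decide

/-- The signed graph `tightGraph` with signature `tightSign` has maximum average degree
exactly `14/5` (i.e. `14/5` is the greatest average degree `2|E(H)|/|V(H)|` over nonempty
subgraphs `H`) and admits no homomorphism to `(K_6, M)`. -/
theorem tight_example_mad_and_no_hom :
    IsGreatest
      {r : ℚ | ∃ H : tightGraph.Subgraph, H.verts.Nonempty ∧
        r = 2 * (H.edgeSet.ncard : ℚ) / (H.verts.ncard : ℚ)} (14 / 5) ∧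
    ¬ SignedHom tightGraph tightSign (⊤ : SimpleGraph (Fin 6)) (matchSign 6) := by
  constructor
  · constructor
    · -- membership: take the whole graph
      refine ⟨⊤, ⟨0, by simp [Subgraph.verts_top]⟩, ?_⟩
      have h1 : (⊤ : tightGraph.Subgraph).edgeSet.ncard = 7 := by
        rw [Subgraph.edgeSet_top, tight_edgeSet_eq, Set.ncard_coe_finset]
        decide
      have h2 : (⊤ : tightGraph.Subgraph).verts.ncard = 5 := by
        rw [Subgraph.verts_top, Set.ncard_univ]
        simp
      rw [h1, h2]
      norm_num
    · -- upper bound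
      rintro r ⟨H, hne, rfl⟩
      have hfin : H.verts.Finite := H.verts.toFinite
      set S : Finset (Fin 5) := hfin.toFinset with hS
      have hn : H.verts.ncard = S.card := Set.ncard_eq_toFinset_card H.verts hfin
      have hsub : H.edgeSet ⊆ ↑(tightEdges.filter (fun e => ∀ v ∈ e, v ∈ S)) := by
        intro e he
        simp only [Finset.coe_filter, Set.mem_setOf_eq]
        constructor
        · have := H.edgeSet_subset he
          rwa [tight_edgeSet_eq, Finset.mem_coe] at this
        · intro v hv
          have := Subgraph.mem_verts_of_mem_edge he hv
          rwa [hS, Set.Finite.mem_toFinset]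
      have hm : H.edgeSet.ncard ≤ (tightEdges.filter (fun e => ∀ v ∈ e, v ∈ S)).card := by
        have := Set.ncard_le_ncard hsub (Finset.finite_toSet _)
        rwa [Set.ncard_coe_finset] at this
      have hkey : 5 * H.edgeSet.ncard ≤ 7 * H.verts.ncard := by
        rw [hn]
        exact le_trans (Nat.mul_le_mul_left 5 hm) (tight_key S)
      have hpos : 0 < H.verts.ncard := by
        rw [hn]
        exact Finset.card_pos.mpr (by rw [hS]; exact Set.Finite.toFinset_nonempty _ |>.mpr hne)
      rw [div_le_div_iff₀ (by exact_mod_cast hpos) (by norm_num)]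
      have : (5 : ℚ) * H.edgeSet.ncard ≤ 7 * H.verts.ncard := by exact_mod_cast hkey
      linarith
  · rintro ⟨f, hf⟩
    have a01 : tightGraph.Adj 0 1 := tight_adj 0 1 (by decide) (by decide)
    have a02 : tightGraph.Adj 0 2 := tight_adj 0 2 (by decide) (by decide)
    have a12 : tightGraph.Adj 1 2 := tight_adj 1 2 (by decide) (by decide)
    have a03 : tightGraph.Adj 0 3 := tight_adj 0 3 (by decide) (by decide)
    have a13 : tightGraph.Adj 1 3 := tight_adj 1 3 (by decide) (by decide)
    have a24 : tightGraph.Adj 2 4 := tight_adj 2 4 (by decide) (by decide)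
    have a34 : tightGraph.Adj 3 4 := tight_adj 3 4 (by decide) (by decide)
    have fne : ∀ a b : Fin 5, tightGraph.Adj a b → f a ≠ f b := fun a b h => by
      simpa using f.map_adj h
    have h1 := hf 0 (.cons a01 (.cons a12 (.cons a02.symm .nil)))
    have h2 := hf 0 (.cons a01 (.cons a13 (.cons a03.symm .nil)))
    have h3 := hf 0 (.cons a02 (.cons a24 (.cons a34.symm (.cons a03.symm .nil))))
    simp only [walkSign, Walk.map_cons, Walk.map_nil, Walk.edges_cons,
      Walk.edges_nil, List.map_cons, List.map_nil, List.prod_cons, List.prod_nil,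
      Sym2.map_pair_eq] at h1 h2 h3
    rw [show tightSign s((0:Fin 5),1) * (tightSign s(1,2) * (tightSign s(2,0) * 1)) = 1
      from by decide] at h1
    rw [show tightSign s((0:Fin 5),1) * (tightSign s(1,3) * (tightSign s(3,0) * 1)) = 1
      from by decide] at h2
    rw [show tightSign s((0:Fin 5),2) * (tightSign s(2,4) * (tightSign s(4,3) *
      (tightSign s(3,0) * 1))) = -1 from by decide] at h3
    exact match_key (f 0) (f 1) (f 2) (f 3) (f 4) (fne 0 1 a01) (fne 0 2 a02)
      (fne 1 2 a12) (fne 0 3 a03) (fne 1 3 a13) (fne 2 4 a24) (fne 3 4 a34) h1 h2 h3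
end

section
/- Every signed graph (G,σ) on a finite simple graph G with mad(G) < 3 admits an edge-sign preserving homomorphism to DSG(K_8,M); equivalently, every such signed graph admits a homomorphism to (K_8,M). -/
open SimpleGraph

/-- `MadLT G r` says that the maximum average degree of `G` is (strictly) less than `r`:
every nonempty subgraph `H` satisfies `2|E(H)| < r·|V(H)|`. -/
def MadLT {V : Type*} (G : SimpleGraph V) (r : ℚ) : Prop :=
  ∀ H : G.Subgraph, H.verts.Nonempty →
    (2 * H.edgeSet.ncard : ℚ) < r * (H.verts.ncard : ℚ)

/-!
A vertex `(x, ε)` of `DSG(K_8, M)` has as *label* the matching edge containing `x` together with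
`ε`; there are 8 labels. Finite checks in `DSG(K_8, M)` show: a path `p – r – w` with prescribed
edge signs exists unless the label of `p` is one *obstruction* determined by `w` and the signs;
the neighbours of a vertex along edges of a given sign carry at least 4 labels; and two vertices
with a common neighbour (along edges of given signs) have common neighbours of at least 2 labels.

Hence a minimal counterexample contains none of: a vertex of degree at most 1; a 2-vertex adjacent
to a vertex of degree at most 3; a 4-vertex with three 2-neighbours; a 5-vertex all of whose
neighbours are 2-vertices. In the last three cases one deletes an independent set `T` of
2-neighbours of a vertex `c`, recolours `c` avoiding the `|T|` obstructions while keeping its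
remaining edges, and reinserts each deleted 2-vertex on a path of length 2. Discharging (each
2-vertex takes `1/2` from each neighbour) shows that a graph without these configurations has
average degree at least 3.

The homomorphism to `(K_8, M)` is the projection `(x, ε) ↦ x`: along a closed walk the vertex
signs `ε` cancel.
-/

open Finset

namespace DSGK8M

abbrev Vert := Fin 8 × ℤˣ

def Edge (p q : Vert) (s : ℤˣ) : Prop :=
  (DSGGraph (⊤ : SimpleGraph (Fin 8))).Adj p q ∧ DSGSign (matchSign 8) s(p, q) = s

theorem edge_iff {p q : Vert} {s : ℤˣ} :
    Edge p q s ↔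
      p.1 ≠ q.1 ∧ p.2 * q.2 * (if (p.1 : ℕ) / 2 = (q.1 : ℕ) / 2 then -1 else 1) = s := by
  simp [Edge, DSGGraph, DSGSign, matchSign]

instance (p q : Vert) (s : ℤˣ) : Decidable (Edge p q s) := decidable_of_iff _ edge_iff.symm

theorem Edge.symm {p q : Vert} {s : ℤˣ} (h : Edge p q s) : Edge q p s :=
  ⟨h.1.symm, by rw [Sym2.eq_swap]; exact h.2⟩

def label (p : Vert) : Fin 4 × ℤˣ := (⟨p.1 / 2, by omega⟩, p.2)

def obstruction (w : Vert) (s t : ℤˣ) : Fin 4 × ℤˣ := label (w.1, -(w.2 * s * t))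

theorem exists_edge_edge_of_label_ne :
    ∀ (p w : Vert) (s t : ℤˣ), label p ≠ obstruction w s t → ∃ r, Edge p r s ∧ Edge r w t := by
  decide

theorem four_le_card_image_label_edge :
    ∀ (y : Vert) (s : ℤˣ), 4 ≤ #((univ.filter (Edge · y s)).image label) := by
  decide

theorem two_le_card_image_label_edge_edge :
    ∀ (y₁ y₂ : Vert) (s₁ s₂ : ℤˣ), (∃ p, Edge p y₁ s₁ ∧ Edge p y₂ s₂) →
      2 ≤ #((univ.filter fun p => Edge p y₁ s₁ ∧ Edge p y₂ s₂).image label) := by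
  decide

variable {S : Finset (Fin 4 × ℤˣ)}

theorem exists_mem_label_notMem {A : Finset Vert} (h : #S < #(A.image label)) :
    ∃ p ∈ A, label p ∉ S := by
  obtain ⟨τ, hτ, hτS⟩ := exists_mem_notMem_of_card_lt_card h
  obtain ⟨p, hp, rfl⟩ := mem_image.mp hτ
  exact ⟨p, hp, hτS⟩

theorem exists_label_notMem (hS : #S < 8) : ∃ p, label p ∉ S := by
  obtain ⟨p, -, hp⟩ := exists_mem_label_notMem (A := univ) (hS.trans_eq (by decide))
  exact ⟨p, hp⟩

theorem exists_edge_label_notMem (y : Vert) (s : ℤˣ) (hS : #S ≤ 3) :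
    ∃ p, Edge p y s ∧ label p ∉ S := by
  obtain ⟨p, hp, hpS⟩ :=
    exists_mem_label_notMem (hS.trans_lt (four_le_card_image_label_edge y s))
  exact ⟨p, (mem_filter.mp hp).2, hpS⟩

theorem exists_edge (y : Vert) (s : ℤˣ) : ∃ p, Edge p y s :=
  (exists_edge_label_notMem y s (S := ∅) (by simp)).imp fun _ h => h.1

theorem exists_edge_edge_label_notMem {y₁ y₂ : Vert} {s₁ s₂ : ℤˣ}
    (h : ∃ p, Edge p y₁ s₁ ∧ Edge p y₂ s₂) (hS : #S ≤ 1) :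
    ∃ p, Edge p y₁ s₁ ∧ Edge p y₂ s₂ ∧ label p ∉ S := by
  obtain ⟨p, hp, hpS⟩ :=
    exists_mem_label_notMem (hS.trans_lt (two_le_card_image_label_edge_edge y₁ y₂ s₁ s₂ h))
  exact ⟨p, (mem_filter.mp hp).2.1, (mem_filter.mp hp).2.2, hpS⟩

theorem exists_forall_edge_label_notMem {α : Type*} [DecidableEq α] {N : Finset α} (q : α → Vert)
    (sg : α → ℤˣ) (hN : #N ≤ 2) (hcommon : ∃ p₀, ∀ z ∈ N, Edge p₀ (q z) (sg z)) (hS : #S ≤ 1) :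
    ∃ p, (∀ z ∈ N, Edge p (q z) (sg z)) ∧ label p ∉ S := by
  obtain ⟨p₀, hp₀⟩ := hcommon
  interval_cases h : #N
  · obtain ⟨p, hp⟩ := exists_label_notMem (S := S) (by omega)
    exact ⟨p, by simp [card_eq_zero.mp h], hp⟩
  · obtain ⟨y, rfl⟩ := card_eq_one.mp h
    obtain ⟨p, hp, hpS⟩ := exists_edge_label_notMem (q y) (sg y) (S := S) (by omega)
    exact ⟨p, by simpa using hp, hpS⟩
  · obtain ⟨y₁, y₂, -, rfl⟩ := card_eq_two.mp h
    obtain ⟨p, hp₁, hp₂, hpS⟩ :=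
      exists_edge_edge_label_notMem ⟨p₀, hp₀ y₁ (by simp), hp₀ y₂ (by simp)⟩ hS
    exact ⟨p, by simp [hp₁, hp₂], hpS⟩

end DSGK8M

section Projection

variable {U V : Type*} {G : SimpleGraph U} {σ : Sym2 U → ℤˣ} {H : SimpleGraph V}
  {π : Sym2 V → ℤˣ}

def DSGGraph.fstHom (H : SimpleGraph V) : DSGGraph H →g H := ⟨Prod.fst, id⟩

theorem walkSign_map_fstHom_comp {f : G →g DSGGraph H}
    (hf : IsESPHom G σ (DSGGraph H) (DSGSign π) f) {a b : U} (w : G.Walk a b) :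
    walkSign π (w.map ((DSGGraph.fstHom H).comp f)) = (f a).2 * (f b).2 * walkSign σ w := by
  induction w with
  | nil => simp [walkSign, Int.units_mul_self]
  | @cons a c b hac w ih =>
    simp only [walkSign, Walk.map_cons, Walk.edges_cons, List.map_cons, List.prod_cons] at ih ⊢
    rw [ih, ← hf a c hac]
    change π s((f a).1, (f c).1) * _ = (f a).2 * _ * ((f a).2 * (f c).2 * π _ * _)
    have := Int.units_mul_self (f a).2
    grind

theorem signedHom_of_espHom_DSGGraph (h : ESPHom G σ (DSGGraph H) (DSGSign π)) :
    SignedHom G σ H π := by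
  obtain ⟨f, hf⟩ := h
  refine ⟨(DSGGraph.fstHom H).comp f, fun u w => ?_⟩
  rw [walkSign_map_fstHom_comp hf, Int.units_mul_self, one_mul]

end Projection

section Reduction

open DSGK8M

variable {V : Type*}

def IsESPOn (G : SimpleGraph V) (σ : Sym2 V → ℤˣ) (s : Finset V) (f : V → Vert) : Prop :=
  ∀ u ∈ s, ∀ v ∈ s, G.Adj u v → Edge (f u) (f v) (σ s(u, v))

def nbrsIn (G : SimpleGraph V) [DecidableRel G.Adj] (s : Finset V) (v : V) : Finset V :=
  s.filter (G.Adj v)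

def degIn (G : SimpleGraph V) [DecidableRel G.Adj] (s : Finset V) (v : V) : ℕ :=
  #(nbrsIn G s v)

def twoNbrsIn (G : SimpleGraph V) [DecidableRel G.Adj] (s : Finset V) (v : V) : Finset V :=
  nbrsIn G (s.filter (degIn G s · = 2)) v

variable {G : SimpleGraph V} {σ : Sym2 V → ℤˣ} {s T : Finset V} {f f' : V → Vert}

theorem IsESPOn.mono (hf : IsESPOn G σ s f) (hts : T ⊆ s) : IsESPOn G σ T f :=
  fun u hu v hv huv => hf u (hts hu) v (hts hv) huv

theorem IsESPOn.of_sdiff [DecidableEq V] (hf' : IsESPOn G σ (s \ T) f')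
    (heq : ∀ v ∈ s \ T, f v = f' v)
    (hT : ∀ x ∈ T, ∀ v ∈ s, G.Adj x v → Edge (f x) (f v) (σ s(x, v))) : IsESPOn G σ s f := by
  intro u hu v hv huv
  by_cases huT : u ∈ T
  · exact hT u huT v hv huv
  by_cases hvT : v ∈ T
  · rw [Sym2.eq_swap]
    exact (hT v hvT u hu huv.symm).symm
  have hu' : u ∈ s \ T := mem_sdiff.mpr ⟨hu, huT⟩
  have hv' : v ∈ s \ T := mem_sdiff.mpr ⟨hv, hvT⟩
  rw [heq u hu', heq v hv']
  exact hf' u hu' v hv' huv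

variable [DecidableRel G.Adj]

@[simp]
theorem mem_nbrsIn {u v : V} : u ∈ nbrsIn G s v ↔ u ∈ s ∧ G.Adj v u :=
  mem_filter

theorem nbrsIn_sdiff [DecidableEq V] (v : V) : nbrsIn G (s \ T) v = nbrsIn G s v \ T := by
  ext u
  simp only [mem_nbrsIn, mem_sdiff]
  tauto

theorem twoNbrsIn_subset_nbrsIn (v : V) : twoNbrsIn G s v ⊆ nbrsIn G s v :=
  filter_subset_filter _ (filter_subset _ _)

theorem twoNbrsIn_subset (v : V) : twoNbrsIn G s v ⊆ s :=
  (twoNbrsIn_subset_nbrsIn v).trans (filter_subset _ _)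

@[simp]
theorem mem_twoNbrsIn {u v : V} :
    u ∈ twoNbrsIn G s v ↔ u ∈ s ∧ G.Adj v u ∧ degIn G s u = 2 := by
  simp only [twoNbrsIn, mem_nbrsIn, mem_filter]
  tauto

theorem sum_card_twoNbrsIn (s : Finset V) :
    ∑ v ∈ s, #(twoNbrsIn G s v) = 2 * #(s.filter (degIn G s · = 2)) := by
  have hbelow : ∀ b ∈ s.filter (degIn G s · = 2), #(s.bipartiteBelow G.Adj b) = 2 := by
    intro b hb
    rw [← (mem_filter.mp hb).2]
    exact congrArg card (filter_congr fun a _ => G.adj_comm a b)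
  calc ∑ v ∈ s, #(twoNbrsIn G s v)
      = ∑ b ∈ s.filter (degIn G s · = 2), #(s.bipartiteBelow G.Adj b) :=
        sum_card_bipartiteAbove_eq_sum_card_bipartiteBelow G.Adj
    _ = 2 * #(s.filter (degIn G s · = 2)) := by
        rw [sum_congr rfl hbelow, sum_const, smul_eq_mul, mul_comm]

theorem three_mul_card_le_sum_degIn (h1 : ∀ v ∈ s, 1 < degIn G s v)
    (h2 : ∀ v ∈ s, ∀ u ∈ s, G.Adj v u → degIn G s v = 2 → 3 < degIn G s u)
    (h4 : ∀ v ∈ s, degIn G s v = 4 → #(twoNbrsIn G s v) < 3)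
    (h5 : ∀ v ∈ s, degIn G s v = 5 → #(twoNbrsIn G s v) < 5) :
    3 * #s ≤ ∑ v ∈ s, degIn G s v := by
  -- with doubled charges: `v` starts with `2 d(v)`, gives `1` to each 2-neighbour and,
  -- if `d(v) = 2`, receives `1` from each of its two neighbours
  have hcharge : ∀ v ∈ s, #(twoNbrsIn G s v) + 6 ≤
      2 * degIn G s v + 2 * (if degIn G s v = 2 then 1 else 0) := by
    intro v hv
    have hle : #(twoNbrsIn G s v) ≤ degIn G s v := card_le_card (twoNbrsIn_subset_nbrsIn v)
    have := h1 v hv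
    rcases (show degIn G s v ≤ 3 ∨ degIn G s v = 4 ∨ degIn G s v = 5 ∨ 6 ≤ degIn G s v by omega)
      with hd | hd | hd | hd
    · have : twoNbrsIn G s v = ∅ := eq_empty_of_forall_notMem fun u hu => by
        obtain ⟨hus, hvu, hu2⟩ := mem_twoNbrsIn.mp hu
        have := h2 u hus v hv hvu.symm hu2
        omega
      simp only [this, card_empty]
      split_ifs <;> omega
    · have := h4 v hv hd
      split_ifs <;> omega
    · have := h5 v hv hd
      split_ifs <;> omega
    · split_ifs <;> omega
  have := sum_le_sum hcharge
  rw [sum_add_distrib, sum_const, smul_eq_mul, sum_card_twoNbrsIn, sum_add_distrib, ← mul_sum,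
    ← mul_sum, ← card_filter] at this
  omega

theorem sum_degIn_lt [Fintype V] (hmad : MadLT G 3) (hs : s.Nonempty) :
    ∑ v ∈ s, degIn G s v < 3 * #s := by
  classical
  set H := (⊤ : G.Subgraph).induce (s : Set V)
  have hnbr (v : V) : H.spanningCoe.neighborFinset v = if v ∈ s then nbrsIn G s v else ∅ := by
    ext u
    split_ifs with hv <;> simp [H, hv]
  have hsum : ∑ v ∈ s, degIn G s v = 2 * H.edgeSet.ncard := by
    rw [← Subgraph.edgeSet_spanningCoe, ← coe_edgeFinset, Set.ncard_coe_finset,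
      ← sum_degrees_eq_twice_card_edges, ← sum_subset (subset_univ s)]
    · refine sum_congr rfl fun v hv => ?_
      rw [← card_neighborFinset_eq_degree, hnbr, if_pos hv, degIn]
    · intro v _ hv
      rw [← card_neighborFinset_eq_degree, hnbr, if_neg hv, card_empty]
  have hmadH := hmad H (by simpa [H] using hs)
  rw [show H.verts.ncard = #s by simp [H]] at hmadH
  rw [hsum]
  exact_mod_cast hmadH

variable [DecidableEq V]

theorem exists_nbrsIn_eq_pair {c : V} (hc : c ∈ s) (hT : T ⊆ twoNbrsIn G s c) :
    ∃ W : V → V, ∀ a ∈ T, W a ≠ c ∧ nbrsIn G s a = {c, W a} := by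
  have (a : V) : ∃ w, a ∈ T → w ≠ c ∧ nbrsIn G s a = {c, w} := by
    by_cases ha : a ∈ T
    · obtain ⟨-, hca, ha2⟩ := mem_twoNbrsIn.mp (hT ha)
      have hc' : c ∈ nbrsIn G s a := mem_nbrsIn.mpr ⟨hc, hca.symm⟩
      obtain ⟨w, hw⟩ := card_eq_one.mp (by rw [card_erase_of_mem hc']; exact congrArg (· - 1) ha2)
      have hw' : w ∈ (nbrsIn G s a).erase c := by rw [hw]; exact mem_singleton_self w
      exact ⟨w, fun _ => ⟨(mem_erase.mp hw').1, by rw [← insert_erase hc', hw]⟩⟩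
    · exact ⟨a, fun h => absurd h ha⟩
  choose W hW using this
  exact ⟨W, hW⟩

theorem exists_isESPOn_of_degIn_le_one {v : V} (hdeg : degIn G s v ≤ 1)
    (hf' : IsESPOn G σ (s \ {v}) f') : ∃ f, IsESPOn G σ s f := by
  have : Nonempty V := ⟨v⟩
  obtain ⟨y, hy⟩ := card_le_one_iff_subset_singleton.mp hdeg
  obtain ⟨p, hp⟩ := exists_edge (f' y) (σ s(v, y))
  refine ⟨Function.update f' v p, hf'.of_sdiff (fun u hu => ?_) fun x hx u hu hxu => ?_⟩
  · exact Function.update_of_ne (by simpa using (mem_sdiff.mp hu).2) _ _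
  · obtain rfl := mem_singleton.mp hx
    obtain rfl := mem_singleton.mp (hy (mem_nbrsIn.mpr ⟨hu, hxu⟩))
    rwa [Function.update_self, Function.update_of_ne hxu.ne']

/-- Each deleted 2-vertex `a ∈ T` is reinserted on a path from `c` to its other neighbour, which
is possible because the label of the recoloured `c` avoids the obstruction of that path. -/
theorem exists_isESPOn_of_twoNbrsIn {c : V} (hc : c ∈ s) (hT : T ⊆ twoNbrsIn G s c)
    (hTT : ∀ a ∈ T, ∀ b ∈ T, ¬ G.Adj a b) (hf' : IsESPOn G σ (s \ T) f')
    (hchoice : ∀ S : Finset (Fin 4 × ℤˣ), #S ≤ #T →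
      ∃ p, (∀ z ∈ nbrsIn G (s \ T) c, Edge p (f' z) (σ s(c, z))) ∧ label p ∉ S) :
    ∃ f, IsESPOn G σ s f := by
  have hcT : c ∉ T := fun h => G.irrefl (mem_nbrsIn.mp (twoNbrsIn_subset_nbrsIn c (hT h))).2
  obtain ⟨W, hW⟩ := exists_nbrsIn_eq_pair hc hT
  have hWc (a) (ha : a ∈ T) : W a ≠ c := (hW a ha).1

  have hWT (a) (ha : a ∈ T) : W a ∉ T := fun h =>
    hTT a ha _ h (mem_nbrsIn.mp (by rw [(hW a ha).2]; simp)).2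
  obtain ⟨p, hpN, hpS⟩ :=
    hchoice (T.image fun a => obstruction (f' (W a)) (σ s(c, a)) (σ s(a, W a))) card_image_le
  have hR : ∀ a, ∃ r, a ∈ T → Edge p r (σ s(c, a)) ∧ Edge r (f' (W a)) (σ s(a, W a)) := by
    intro a
    by_cases ha : a ∈ T
    · obtain ⟨r, hr⟩ := exists_edge_edge_of_label_ne p _ _ _ fun h =>
        hpS (mem_image.mpr ⟨a, ha, h.symm⟩)
      exact ⟨r, fun _ => hr⟩
    · exact ⟨p, fun h => absurd h ha⟩
  choose R hR using hR
  refine ⟨fun z => if z ∈ T then R z else if z = c then p else f' z,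
    (hf'.mono (sdiff_subset_sdiff le_rfl (subset_insert c T))).of_sdiff (T := insert c T)
      (fun v hv => ?_) fun x hx v hv hxv => ?_⟩
  · have : v ∉ T ∧ v ≠ c := by simp at hv; tauto
    simp [this]
  · rcases mem_insert.mp hx with rfl | hxT
    · by_cases hvT : v ∈ T
      · simpa [hvT, hcT] using (hR v hvT).1
      · simpa [hvT, hcT, hxv.ne'] using hpN v (by simp [nbrsIn_sdiff, hv, hxv, hvT])
    · have hv' : v ∈ nbrsIn G s x := mem_nbrsIn.mpr ⟨hv, hxv⟩
      rw [(hW x hxT).2] at hv'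
      rcases mem_insert.mp hv' with rfl | hv'
      · rw [Sym2.eq_swap]
        simpa [hxT, hcT] using (hR x hxT).1.symm
      · obtain rfl := mem_singleton.mp hv'
        simpa [hxT, hWT x hxT, hWc x hxT] using (hR x hxT).2

theorem exists_isESPOn_of_degIn_eq_two_adj {u v : V} (hu : u ∈ s) (hv : v ∈ s) (hvu : G.Adj v u)
    (hv2 : degIn G s v = 2) (hu3 : degIn G s u ≤ 3) (hf' : IsESPOn G σ (s \ {v}) f') :
    ∃ f, IsESPOn G σ s f := by
  refine exists_isESPOn_of_twoNbrsIn (T := {v}) hu (by simp [hv, hvu.symm, hv2]) (by simp)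
    hf' fun S hS => ?_
  have hN : #(nbrsIn G (s \ {v}) u) ≤ 2 := by
    have : #(nbrsIn G s u) ≤ 3 := hu3
    rw [nbrsIn_sdiff, card_sdiff_of_subset (by simp [hv, hvu.symm]), card_singleton]
    omega
  have hvu' : u ∈ s \ {v} := by simp [hu, hvu.ne']
  exact exists_forall_edge_label_notMem _ _ hN
    ⟨f' u, fun z hz => hf' u hvu' z (mem_nbrsIn.mp hz).1 (mem_nbrsIn.mp hz).2⟩ (by simpa using hS)

theorem exists_isESPOn_of_degIn_eq_four {v : V} (hv : v ∈ s) (h4 : degIn G s v = 4)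
    (h3 : 3 ≤ #(twoNbrsIn G s v))
    (hind : ∀ a ∈ twoNbrsIn G s v, ∀ b ∈ twoNbrsIn G s v, ¬ G.Adj a b)
    (ih : ∀ t ⊂ s, ∃ f, IsESPOn G σ t f) : ∃ f, IsESPOn G σ s f := by
  obtain ⟨T, hT, hT3⟩ := exists_subset_card_eq h3
  have hTN : T ⊆ nbrsIn G s v := hT.trans (twoNbrsIn_subset_nbrsIn v)
  obtain ⟨f', hf'⟩ := ih (s \ T) (sdiff_ssubset (hT.trans (twoNbrsIn_subset v))
    (card_pos.mp (by omega)))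
  obtain ⟨y, hy⟩ : ∃ y, nbrsIn G (s \ T) v = {y} := by
    have : #(nbrsIn G s v) = 4 := h4
    exact card_eq_one.mp (by rw [nbrsIn_sdiff, card_sdiff_of_subset hTN]; omega)
  refine exists_isESPOn_of_twoNbrsIn hv hT (fun a ha b hb => hind a (hT ha) b (hT hb)) hf'
    fun S hS => ?_
  obtain ⟨p, hp, hpS⟩ := exists_edge_label_notMem (f' y) (σ s(v, y)) (hS.trans hT3.le)
  exact ⟨p, by simpa [hy] using hp, hpS⟩

theorem exists_isESPOn_of_degIn_eq_five {v : V} (hv : v ∈ s) (h5 : degIn G s v = 5)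
    (h5' : 5 ≤ #(twoNbrsIn G s v))
    (hind : ∀ a ∈ twoNbrsIn G s v, ∀ b ∈ twoNbrsIn G s v, ¬ G.Adj a b)
    (ih : ∀ t ⊂ s, ∃ f, IsESPOn G σ t f) : ∃ f, IsESPOn G σ s f := by
  have hdeg : #(nbrsIn G s v) = 5 := h5
  have hTN : twoNbrsIn G s v = nbrsIn G s v :=
    eq_of_subset_of_card_le (twoNbrsIn_subset_nbrsIn v) (by omega)
  obtain ⟨f', hf'⟩ := ih (s \ twoNbrsIn G s v)
    (sdiff_ssubset (twoNbrsIn_subset v) (card_pos.mp (by omega)))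
  refine exists_isESPOn_of_twoNbrsIn hv subset_rfl hind hf' fun S hS => ?_
  obtain ⟨p, hp⟩ := exists_label_notMem (S := S) (by rw [hTN] at hS; omega)
  exact ⟨p, by simp [nbrsIn_sdiff, hTN], hp⟩

theorem exists_isESPOn [Fintype V] (hmad : MadLT G 3) (σ : Sym2 V → ℤˣ) (s : Finset V) :
    ∃ f, IsESPOn G σ s f := by
  induction s using Finset.strongInduction with
  | H s ih =>
  rcases s.eq_empty_or_nonempty with rfl | hs
  · exact ⟨fun _ => (0, 1), by simp [IsESPOn]⟩
  have ih₁ (v) (hv : v ∈ s) : ∃ f, IsESPOn G σ (s \ {v}) f :=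
    ih _ (sdiff_ssubset (singleton_subset_iff.mpr hv) (singleton_nonempty v))
  by_cases h1 : ∃ v ∈ s, degIn G s v ≤ 1
  · obtain ⟨v, hv, hd⟩ := h1
    obtain ⟨f', hf'⟩ := ih₁ v hv
    exact exists_isESPOn_of_degIn_le_one hd hf'
  by_cases h2 : ∃ v ∈ s, ∃ u ∈ s, G.Adj v u ∧ degIn G s v = 2 ∧ degIn G s u ≤ 3
  · obtain ⟨v, hv, u, hu, hvu, hv2, hu3⟩ := h2
    obtain ⟨f', hf'⟩ := ih₁ v hv
    exact exists_isESPOn_of_degIn_eq_two_adj hu hv hvu hv2 hu3 hf'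
  push Not at h1 h2
  have hind (v) : ∀ a ∈ twoNbrsIn G s v, ∀ b ∈ twoNbrsIn G s v, ¬ G.Adj a b := by
    intro a ha b hb hab
    obtain ⟨has, -, ha2⟩ := mem_twoNbrsIn.mp ha
    obtain ⟨hbs, -, hb2⟩ := mem_twoNbrsIn.mp hb
    have := h2 a has b hbs hab ha2
    omega
  by_cases h4 : ∃ v ∈ s, degIn G s v = 4 ∧ 3 ≤ #(twoNbrsIn G s v)
  · obtain ⟨v, hv, hd, hk⟩ := h4
    exact exists_isESPOn_of_degIn_eq_four hv hd hk (hind v) ih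
  by_cases h5 : ∃ v ∈ s, degIn G s v = 5 ∧ 5 ≤ #(twoNbrsIn G s v)
  · obtain ⟨v, hv, hd, hk⟩ := h5
    exact exists_isESPOn_of_degIn_eq_five hv hd hk (hind v) ih
  push Not at h4 h5
  exact absurd (three_mul_card_le_sum_degIn h1 h2 h4 h5) (sum_degIn_lt hmad hs).not_ge

end Reduction

/-- Every signed graph with maximum average degree less than `3` admits an edge-sign preserving
homomorphism to `DSG(K_8, M)`; equivalently, it admits a homomorphism to `(K_8, M)`. -/
theorem espHom_DSGK8M_of_madLT {V : Type*} [Fintype V]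
    (G : SimpleGraph V) (σ : Sym2 V → ℤˣ) (hmad : MadLT G 3) :
    ESPHom G σ (DSGGraph (⊤ : SimpleGraph (Fin 8))) (DSGSign (matchSign 8)) ∧
    SignedHom G σ (⊤ : SimpleGraph (Fin 8)) (matchSign 8) := by
  classical
  obtain ⟨f, hf⟩ := exists_isESPOn hmad σ univ
  have hesp : ESPHom G σ (DSGGraph (⊤ : SimpleGraph (Fin 8))) (DSGSign (matchSign 8)) :=
    ⟨⟨f, fun h => (hf _ (mem_univ _) _ (mem_univ _) h).1⟩,
      fun u v h => (hf u (mem_univ u) v (mem_univ v) h).2⟩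
  exact ⟨hesp, signedHom_of_espHom_DSGGraph hesp⟩
end

section
/- Let l ≥ 3 and let (G_l,σ) be the signed graph obtained from a negative cycle of length l by adding, for each edge e of the cycle, one new vertex joined to both endpoints of e, with the signs of the two new edges chosen so that each of the l resulting triangles is positive. Then for every k ≥ 1, (G_l,σ) admits no homomorphism to (K_{2k},M). -/
open SimpleGraph

/-- The underlying graph `G_l`: a cycle on the vertices `inl 0, …, inl (l-1)` (with `inl i`
adjacent to `inl (i+1)`, indices mod `l`), together with, for each cycle edge
`inl i — inl (i+1)`, a new vertex `inr i` joined to both of its endpoints. -/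
def cyclePlusTriangles (l : ℕ) [NeZero l] : SimpleGraph (Fin l ⊕ Fin l) :=
  SimpleGraph.fromRel (fun a b =>
    match a, b with
    | Sum.inl i, Sum.inl j => j = i + 1
    | Sum.inr i, Sum.inl j => j = i ∨ j = i + 1
    | _, _ => False)

/-!
In `(K_{2k}, M)` the negative edges form a matching, so a triangle contains at most one negative
edge; a positive triangle therefore has all three edges positive. A signed homomorphism sends each
positive triangle of `G_l` to a positive triangle, so every edge of the base cycle is mapped to a
positive edge. The image of the base cycle is then a positive closed walk, whereas the base cycle
itself is negative.
-/

open Fin.NatCast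

namespace SimpleGraph

variable {V : Type*} {G : SimpleGraph V}

def seqWalk (v : ℕ → V) (hv : ∀ i, G.Adj (v i) (v (i + 1))) : (n : ℕ) → G.Walk (v 0) (v n)
  | 0 => .nil
  | n + 1 => (seqWalk v hv n).concat (hv n)

lemma exists_eq_of_mem_edges_seqWalk {v : ℕ → V} {hv : ∀ i, G.Adj (v i) (v (i + 1))} {n : ℕ}
    {e : Sym2 V} (he : e ∈ (seqWalk v hv n).edges) : ∃ i, e = s(v i, v (i + 1)) := by
  induction n with
  | zero => simp [seqWalk] at he
  | succ n ih =>
    rw [seqWalk, Walk.edges_concat, List.concat_eq_append, List.mem_append,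
      List.mem_singleton] at he
    exact he.elim ih fun h => ⟨n, h⟩

lemma walkSign_seqWalk (σ : Sym2 V → ℤˣ) (v : ℕ → V) (hv : ∀ i, G.Adj (v i) (v (i + 1)))
    (n : ℕ) : walkSign σ (seqWalk v hv n) = ∏ i ∈ Finset.range n, σ s(v i, v (i + 1)) := by
  induction n with
  | zero => rfl
  | succ n ih =>
    rw [Finset.prod_range_succ, ← ih]
    simp [walkSign, seqWalk, Walk.edges_concat]

end SimpleGraph

open SimpleGraph

section SignedHom

variable {U V : Type*} {G : SimpleGraph U} {σ : Sym2 U → ℤˣ} {H : SimpleGraph V}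
  {π : Sym2 V → ℤˣ} {f : G →g H}

lemma IsSignedHom.map_triangle (hf : IsSignedHom G σ H π f) {a b c : U} (hab : G.Adj a b)
    (hbc : G.Adj b c) (hca : G.Adj c a) :
    π s(f a, f b) * π s(f b, f c) * π s(f c, f a) = σ s(a, b) * σ s(b, c) * σ s(c, a) := by
  simpa [walkSign, mul_assoc] using hf a (.cons hab (.cons hbc (.cons hca .nil)))

lemma IsSignedHom.walkSign_eq_one (hf : IsSignedHom G σ H π f) {u : U} (w : G.Walk u u)
    (hw : ∀ e ∈ w.edges, π (e.map f) = 1) : walkSign σ w = 1 := by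
  rw [← hf u w, walkSign, Walk.edges_map, List.map_map]
  exact List.prod_eq_one (by simpa using hw)

end SignedHom

lemma matchSign_mk {n : ℕ} (a b : Fin n) :
    matchSign n s(a, b) = if (a : ℕ) / 2 = (b : ℕ) / 2 then -1 else 1 := by
  simp [matchSign]

lemma matchSign_eq_one_of_triangle {n : ℕ} {x y z : Fin n} (hxy : x ≠ y) (hyz : y ≠ z)
    (hzx : z ≠ x) (h : matchSign n s(x, y) * matchSign n s(y, z) * matchSign n s(z, x) = 1) :
    matchSign n s(x, y) = 1 := by
  rw [← Fin.val_ne_iff] at hxy hyz hzx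
  simp only [matchSign_mk] at h ⊢
  split_ifs at h ⊢ <;> first | rfl | omega | exact absurd h (by decide)

lemma IsSignedHom.matchSign_eq_one_of_triangle {U : Type*} {G : SimpleGraph U}
    {σ : Sym2 U → ℤˣ} {n : ℕ} {f : G →g ⊤} (hf : IsSignedHom G σ ⊤ (matchSign n) f)
    {a b c : U} (hab : G.Adj a b) (hbc : G.Adj b c) (hca : G.Adj c a)
    (h : σ s(a, b) * σ s(b, c) * σ s(c, a) = 1) : matchSign n s(f a, f b) = 1 :=
  _root_.matchSign_eq_one_of_triangle (f.map_adj hab).ne (f.map_adj hbc).ne (f.map_adj hca).ne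
    ((hf.map_triangle hab hbc hca).trans h)

namespace cyclePlusTriangles

variable {l : ℕ} [NeZero l]

lemma adj_inl_inl_add_one (hl : 1 < l) (i : Fin l) :
    (cyclePlusTriangles l).Adj (.inl i) (.inl (i + 1)) := by
  refine ⟨?_, .inl rfl⟩
  have : (1 : Fin l) ≠ 0 := by simp [Fin.ext_iff, Nat.mod_eq_of_lt hl]
  simpa [eq_comm (a := i)] using this

lemma adj_inl_inr (i : Fin l) : (cyclePlusTriangles l).Adj (.inl i) (.inr i) :=
  ⟨by simp, .inr (.inl rfl)⟩

lemma adj_inl_add_one_inr (i : Fin l) : (cyclePlusTriangles l).Adj (.inl (i + 1)) (.inr i) :=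
  ⟨by simp, .inr (.inr rfl)⟩

def baseCycle (hl : 1 < l) : (cyclePlusTriangles l).Walk (.inl 0) (.inl 0) :=
  (seqWalk (fun i : ℕ => .inl (i : Fin l))
    (fun i => by simpa using adj_inl_inl_add_one hl (i : Fin l)) l).copy rfl
    (by simp)

lemma exists_eq_of_mem_edges_baseCycle {hl : 1 < l} {e : Sym2 (Fin l ⊕ Fin l)}
    (he : e ∈ (baseCycle hl).edges) : ∃ i : Fin l, e = s(.inl i, .inl (i + 1)) := by
  obtain ⟨i, rfl⟩ := exists_eq_of_mem_edges_seqWalk (by simpa [baseCycle] using he)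
  exact ⟨i, by simp⟩

lemma walkSign_baseCycle (hl : 1 < l) (σ : Sym2 (Fin l ⊕ Fin l) → ℤˣ) :
    walkSign σ (baseCycle hl) = ∏ i : Fin l, σ s(.inl i, .inl (i + 1)) := by
  rw [baseCycle, walkSign, Walk.edges_copy, ← walkSign, walkSign_seqWalk,
    Finset.prod_range (fun i : ℕ => σ s(.inl (i : Fin l), .inl ((i + 1 : ℕ) : Fin l)))]
  simp

end cyclePlusTriangles

theorem cyclePlusTriangles_no_hom_general (l : ℕ) [NeZero l] (hl : 3 ≤ l)
    (σ : Sym2 (Fin l ⊕ Fin l) → ℤˣ)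
    (hcyc : ∏ i : Fin l, σ s(Sum.inl i, Sum.inl (i + 1)) = -1)
    (htri : ∀ i : Fin l,
      σ s(Sum.inl i, Sum.inl (i + 1)) * σ s(Sum.inl i, Sum.inr i) *
        σ s(Sum.inl (i + 1), Sum.inr i) = 1)
    (k : ℕ) :
    ¬ SignedHom (cyclePlusTriangles l) σ (⊤ : SimpleGraph (Fin (2 * k))) (matchSign (2 * k)) := by
  rintro ⟨f, hf⟩
  have hl₁ : 1 < l := by omega
  have hedge (i : Fin l) : matchSign (2 * k) (s(.inl i, .inl (i + 1)).map f) = 1 := by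
    refine hf.matchSign_eq_one_of_triangle (cyclePlusTriangles.adj_inl_inl_add_one hl₁ i)
      (cyclePlusTriangles.adj_inl_add_one_inr i) (cyclePlusTriangles.adj_inl_inr i).symm ?_
    rw [Sym2.eq_swap (a := Sum.inr i), ← htri i, mul_right_comm]
  have hpos := hf.walkSign_eq_one (cyclePlusTriangles.baseCycle hl₁) fun e he => by
    obtain ⟨i, rfl⟩ := cyclePlusTriangles.exists_eq_of_mem_edges_baseCycle he
    exact hedge i
  rw [cyclePlusTriangles.walkSign_baseCycle, hcyc] at hpos
  exact absurd hpos (by decide)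

/-- If `σ` makes the base `l`-cycle of `G_l` negative and each of the `l` triangles positive,
then `(G_l, σ)` admits no homomorphism to `(K_{2k}, M)` for any `k ≥ 1`. -/
theorem cyclePlusTriangles_no_hom (l : ℕ) [NeZero l] (hl : 3 ≤ l)
    (σ : Sym2 (Fin l ⊕ Fin l) → ℤˣ)
    (hcyc : ∏ i : Fin l, σ s(Sum.inl i, Sum.inl (i + 1)) = -1)
    (htri : ∀ i : Fin l,
      σ s(Sum.inl i, Sum.inl (i + 1)) * σ s(Sum.inl i, Sum.inr i) *
        σ s(Sum.inl (i + 1), Sum.inr i) = 1)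
    (k : ℕ) (hk : 1 ≤ k) :
    ¬ SignedHom (cyclePlusTriangles l) σ (⊤ : SimpleGraph (Fin (2 * k))) (matchSign (2 * k)) :=
  cyclePlusTriangles_no_hom_general l hl σ hcyc htri k
end

section
/- Let (P,σ) be a signed path on vertices x, z, y with edges xz and zy, and let L be a list assignment with L(z) = C, L(x) = {c_x} and L(y) = {c_y}. If it is not the case that (1) c_x and c_y lie in the same layer but on different sides and σ(xz)σ(zy) = +1, and not the case that (2) c_x and c_y lie in the same layer and on the same side and σ(xz)σ(zy) = −1, then (P,σ) admits an L-coloring. -/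
/-!
A middle colour `(m, β)` works iff `m` avoids `cx.1` and `cy.1` and both edge signs match. The
sign `β` is forced by the first edge, so the only condition left is that the product of
the `K_6`-signs `π(cx.1 m) π(m cy.1)` equals `σ(xz) σ(zy)` times the sides of `cx` and `cy`.
A layer avoiding both `cx` and `cy` gives the product `+1`. The partner of `cx.1` gives `−1`,
unless `cy` lies in the layer of `cx`; then only `+1` is possible, and the excluded
configurations (1) and (2) are exactly the ones that would need `−1`.
-/


open SimpleGraph

/-- The color set `C`: the vertex set of `DSG(K_6, M)`, encoding `x^+` as `(x, 1)` and `x^−`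
as `(x, -1)` for `x` a vertex of `K_6`. -/
abbrev ColorC : Type := Fin 6 × ℤˣ

/-- The perfect matching on the vertices of `K_6`: `0↔1, 2↔3, 4↔5` (i.e. `12, 34, 56`). -/
def pairFn : Fin 6 → Fin 6 := ![1, 0, 3, 2, 5, 4]

/-- The pair of a color: the matched `K_6`-vertex on the same side. -/
def pairC (c : ColorC) : ColorC := (pairFn c.1, c.2)

/-- Two colors lie in the same layer iff their `K_6`-vertices lie in the same matched pair. -/
def SameLayer (c d : ColorC) : Prop := (c.1 : ℕ) / 2 = (d.1 : ℕ) / 2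

/-- The underlying graph of `DSG(K_6, M)`: `(x, s)` is adjacent to `(y, t)` iff `x ≠ y`. -/
def DSG6 : SimpleGraph ColorC where
  Adj a b := a.1 ≠ b.1
  symm := ⟨fun _ _ h => Ne.symm h⟩
  loopless := ⟨fun _ h => h rfl⟩

/-- The sign of the `DSG(K_6, M)`-edge between colors `c` and `d`: it is
`c.2 * d.2 * π(c.1 d.1)` where `π` is the signature of `(K_6, M)` (negative exactly on the
matching `12, 34, 56`). -/
def dsgSign (c d : ColorC) : ℤˣ :=
  c.2 * d.2 * (if (c.1 : ℕ) / 2 = (d.1 : ℕ) / 2 then -1 else 1)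

/-- A set of colors is paired if for all but at most one of its elements, the pair of the
element also lies in the set. -/
def IsPaired (L : Set ColorC) : Prop := {c | c ∈ L ∧ pairC c ∉ L}.Subsingleton

/-- A set of colors is layered if it is paired and no three of its colors lie in a common
layer. -/
def IsLayered (L : Set ColorC) : Prop :=
  IsPaired L ∧ ∀ j : ℕ, {c | c ∈ L ∧ (c.1 : ℕ) / 2 = j}.ncard ≤ 2

/-- A set of colors is one-sided if all its colors lie on the same side. -/
def IsOneSided (L : Set ColorC) : Prop :=
  (∀ c ∈ L, c.2 = 1) ∨ (∀ c ∈ L, c.2 = -1)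

/-- A neighbored `(2k+1)`-set: a layered set of size `2k+1` consisting of `k` pairs all on one
side together with a single color on the other side. -/
def IsNeighbored (k : ℕ) (L : Set ColorC) : Prop :=
  IsLayered L ∧ L.ncard = 2 * k + 1 ∧
    ∃ α : ℤˣ, ∃ c ∈ L, c.2 = -α ∧ ∀ d ∈ L, d ≠ c → d.2 = α ∧ pairC d ∈ L

/-- An `L`-coloring of a signed graph `(G, σ)` with list assignment `L`: an edge-sign
preserving homomorphism `φ` of `(G, σ)` to `DSG(K_6, M)` with `φ v ∈ L v` for all `v`. -/
def IsLColoring {V : Type*} (G : SimpleGraph V) (σ : Sym2 V → ℤˣ)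
    (L : V → Set ColorC) (φ : V → ColorC) : Prop :=
  (∀ v, φ v ∈ L v) ∧
  ∀ u v : V, G.Adj u v → (φ u).1 ≠ (φ v).1 ∧ dsgSign (φ u) (φ v) = σ s(u, v)

-- The signature `π` of `(K_6, M)`, extended by `-1` on the diagonal.
def layerSign (a b : Fin 6) : ℤˣ := if (a : ℕ) / 2 = (b : ℕ) / 2 then -1 else 1

lemma dsgSign_eq (c d : ColorC) : dsgSign c d = c.2 * d.2 * layerSign c.1 d.1 := rfl

lemma dsgSign_comm (c d : ColorC) : dsgSign c d = dsgSign d c := by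
  simp only [dsgSign_eq, layerSign, eq_comm, mul_comm c.2]

lemma Int.units_mul_self_mul (u v : ℤˣ) : u * (u * v) = v := by
  rw [← mul_assoc, Int.units_mul_self, one_mul]

lemma isLColoring_pathGraph_three (σ : Sym2 (Fin 3) → ℤˣ) (cx c cy : ColorC)
    (hx : c.1 ≠ cx.1) (hy : c.1 ≠ cy.1)
    (hxc : dsgSign cx c = σ s(0, 1)) (hcy : dsgSign c cy = σ s(1, 2)) :
    IsLColoring (pathGraph 3) σ ![{cx}, Set.univ, {cy}] ![cx, c, cy] := by
  refine ⟨fun v => by fin_cases v <;> simp, fun u v huv => ?_⟩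
  rw [pathGraph_adj] at huv
  fin_cases u <;> fin_cases v <;>
    simp_all [dsgSign_comm c cx, dsgSign_comm cy c, Ne.symm hx, Ne.symm hy] <;>
    exact congrArg σ Sym2.eq_swap

lemma exists_isLColoring_pathGraph_three_of_layerSign (σ : Sym2 (Fin 3) → ℤˣ)
    (cx cy : ColorC) (m : Fin 6) (hx : m ≠ cx.1) (hy : m ≠ cy.1)
    (hm : layerSign cx.1 m * layerSign m cy.1 = σ s(0, 1) * σ s(1, 2) * (cx.2 * cy.2)) :
    ∃ φ, IsLColoring (pathGraph 3) σ ![{cx}, Set.univ, {cy}] φ := by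
  have hmy : layerSign m cy.1 = layerSign cx.1 m * (σ s(0, 1) * σ s(1, 2) * (cx.2 * cy.2)) := by
    rw [← hm, Int.units_mul_self_mul]
  refine ⟨_, isLColoring_pathGraph_three σ cx (m, cx.2 * layerSign cx.1 m * σ s(0, 1)) cy
    hx hy ?_ ?_⟩
  · simp only [dsgSign_eq, mul_comm, mul_assoc, Int.units_mul_self_mul]
  · simp only [dsgSign_eq, hmy, mul_comm, mul_left_comm, mul_assoc, Int.units_mul_self_mul]

lemma exists_layerSign_mul_eq_one : ∀ a b : Fin 6,
    ∃ m, m ≠ a ∧ m ≠ b ∧ layerSign a m * layerSign m b = 1 := by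
  decide

lemma exists_layerSign_mul_eq_neg_one : ∀ a b : Fin 6, (a : ℕ) / 2 ≠ (b : ℕ) / 2 →
    ∃ m, m ≠ a ∧ m ≠ b ∧ layerSign a m * layerSign m b = -1 := by
  decide

/-- Observation 4.3: for a signed path `x z y` with `L(z) = C`, `L(x) = {c_x}`,
`L(y) = {c_y}`, an `L`-coloring exists unless `c_x, c_y` are in the same layer on different
sides and the path is positive, or in the same layer on the same side and the path is
negative. -/
theorem path3_LColorable (σ : Sym2 (Fin 3) → ℤˣ) (cx cy : ColorC)
    (h1 : ¬ (SameLayer cx cy ∧ cx.2 ≠ cy.2 ∧ σ s(0, 1) * σ s(1, 2) = 1))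
    (h2 : ¬ (SameLayer cx cy ∧ cx.2 = cy.2 ∧ σ s(0, 1) * σ s(1, 2) = -1)) :
    ∃ φ, IsLColoring (pathGraph 3) σ ![{cx}, Set.univ, {cy}] φ := by
  obtain ⟨m, hmx, hmy, hm⟩ : ∃ m, m ≠ cx.1 ∧ m ≠ cy.1 ∧
      layerSign cx.1 m * layerSign m cy.1 = σ s(0, 1) * σ s(1, 2) * (cx.2 * cy.2) := by
    by_cases hl : SameLayer cx cy
    · have hσ : σ s(0, 1) * σ s(1, 2) = cx.2 * cy.2 := by
        rcases eq_or_ne cx.2 cy.2 with hs | hs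
        · rw [hs, Int.units_mul_self]
          exact (Int.units_eq_one_or _).resolve_right fun h => h2 ⟨hl, hs, h⟩
        · rw [Int.units_ne_iff_eq_neg.1 hs, neg_mul, Int.units_mul_self]
          exact (Int.units_eq_one_or _).resolve_left fun h => h1 ⟨hl, hs, h⟩
      rw [hσ, Int.units_mul_self]
      exact exists_layerSign_mul_eq_one cx.1 cy.1
    · rcases Int.units_eq_one_or (σ s(0, 1) * σ s(1, 2) * (cx.2 * cy.2)) with h | h <;> rw [h]
      · exact exists_layerSign_mul_eq_one cx.1 cy.1
      · exact exists_layerSign_mul_eq_neg_one cx.1 cy.1 hl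
  exact exists_isLColoring_pathGraph_three_of_layerSign σ cx cy m hmx hmy hm
end

section
/- Let (P,σ) be a signed path on vertices v, v_1, v_2 with edges v v_1 and v_1 v_2, and let L be a list assignment with L(v) = L(v_1) = C and L(v_2) a singleton. Then the set of colors c ∈ C for which there exists an L-coloring φ of (P,σ) with φ(v) = c is a paired set of size 10. -/
/-! An `L`-coloring of the path is a middle color `d` joined to `c₂` by an edge of sign
`σ(v₁v₂)` and to `φ v = c` by an edge of sign `σ(vv₁)`. If `c` lies in the layer of `c₂`, then
`d` is in the layer of `c` iff it is in the layer of `c₂`, so the two layer factors of `dsgSign`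
cancel and the side of `c` is forced to be `σ(vv₁) σ(v₁v₂)` times the side of `c₂`. Otherwise both
sides of `c` are reached, through a middle color in the third layer or in the layer of `c`. So the
admissible set misses exactly the two colors of the layer of `c₂` on the wrong side: it is closed
under pairing and has `12 - 2 = 10` elements. -/

open SimpleGraph

lemma pairFn_ne_self (x : Fin 6) : pairFn x ≠ x := by
  revert x; decide

lemma pairFn_div_two (x : Fin 6) : (pairFn x : ℕ) / 2 = (x : ℕ) / 2 := by
  revert x; decide

lemma exists_div_two_ne_ne (y z : Fin 6) :
    ∃ x : Fin 6, (x : ℕ) / 2 ≠ y / 2 ∧ (x : ℕ) / 2 ≠ z / 2 := by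
  revert y z; decide

lemma sameLayer_pairFn_left {c d : ColorC} {s : ℤˣ} :
    SameLayer (pairFn c.1, s) d ↔ SameLayer c d := by
  simp only [SameLayer, pairFn_div_two]

lemma dsgSign_of_sameLayer {c d : ColorC} (h : SameLayer c d) :
    dsgSign c d = -(c.2 * d.2) := by
  simp [dsgSign, show (c.1 : ℕ) / 2 = (d.1 : ℕ) / 2 from h]

lemma dsgSign_of_not_sameLayer {c d : ColorC} (h : ¬SameLayer c d) :
    dsgSign c d = c.2 * d.2 := by
  simp [dsgSign, show (c.1 : ℕ) / 2 ≠ (d.1 : ℕ) / 2 from h]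

def SignedAdj (s : ℤˣ) (c d : ColorC) : Prop := c.1 ≠ d.1 ∧ dsgSign c d = s

lemma signedAdj_comm {s : ℤˣ} {c d : ColorC} : SignedAdj s c d ↔ SignedAdj s d c := by
  rw [SignedAdj, SignedAdj, ne_comm, dsgSign_comm]

lemma signedAdj_iff_of_not_sameLayer {s : ℤˣ} {c d : ColorC} (h : ¬SameLayer c d) :
    SignedAdj s c d ↔ c.2 * d.2 = s := by
  rw [SignedAdj, dsgSign_of_not_sameLayer h, and_iff_right_iff_imp]
  rintro - hcd
  exact h (congrArg (fun x : Fin 6 => (x : ℕ) / 2) hcd)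

lemma signedAdj_iff_of_sameLayer {s : ℤˣ} {c d : ColorC} (h : SameLayer c d) :
    SignedAdj s c d ↔ c.1 ≠ d.1 ∧ -(c.2 * d.2) = s := by
  rw [SignedAdj, dsgSign_of_sameLayer h]

lemma exists_signedAdj_signedAdj_iff {a b : ℤˣ} {c e : ColorC} :
    (∃ d, SignedAdj a c d ∧ SignedAdj b d e) ↔ ¬SameLayer c e ∨ c.2 = a * b * e.2 := by
  constructor
  · rintro ⟨d, ⟨-, rfl⟩, ⟨-, rfl⟩⟩
    refine or_iff_not_imp_left.2 fun hce => ?_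
    have hlayer : SameLayer c d ↔ SameLayer d e := by
      unfold SameLayer at *; omega
    by_cases hde : SameLayer d e
    · rw [dsgSign_of_sameLayer (hlayer.2 hde), dsgSign_of_sameLayer hde]
      simp [mul_assoc, Int.units_mul_self]
    · rw [dsgSign_of_not_sameLayer (hlayer.not.2 hde), dsgSign_of_not_sameLayer hde]
      simp [mul_assoc, Int.units_mul_self]
  · intro h
    by_cases hc : c.2 = a * b * e.2
    · obtain ⟨x, hxc, hxe⟩ := exists_div_two_ne_ne c.1 e.1
      refine ⟨(x, b * e.2), (signedAdj_iff_of_not_sameLayer (Ne.symm hxc)).2 ?_,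
        (signedAdj_iff_of_not_sameLayer (c := (x, b * e.2)) hxe).2 ?_⟩ <;>
      simp [hc, mul_assoc, mul_left_comm, Int.units_mul_self]
    · have hce : ¬SameLayer c e := h.resolve_right hc
      have hd : SameLayer c (pairFn c.1, b * e.2) := (pairFn_div_two c.1).symm
      refine ⟨(pairFn c.1, b * e.2),
        (signedAdj_iff_of_sameLayer hd).2 ⟨(pairFn_ne_self c.1).symm, ?_⟩,
        (signedAdj_iff_of_not_sameLayer (sameLayer_pairFn_left.not.2 hce)).2 ?_⟩ <;>
      simp [Int.units_ne_iff_eq_neg.1 hc, mul_assoc, mul_left_comm, Int.units_mul_self]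

lemma isLColoring_pathGraph_three_iff {σ : Sym2 (Fin 3) → ℤˣ} {L : Fin 3 → Set ColorC}
    {φ : Fin 3 → ColorC} :
    IsLColoring (pathGraph 3) σ L φ ↔ (∀ v, φ v ∈ L v) ∧
      SignedAdj (σ s(0, 1)) (φ 0) (φ 1) ∧ SignedAdj (σ s(1, 2)) (φ 1) (φ 2) := by
  refine and_congr_right fun _ =>
    ⟨fun h => ⟨h 0 1 (by simp [pathGraph_adj]), h 1 2 (by simp [pathGraph_adj])⟩, ?_⟩
  rintro ⟨h01, h12⟩ u v huv
  rw [pathGraph_adj] at huv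
  fin_cases u <;> fin_cases v
  all_goals first
    | exact h01
    | exact h12
    | (rw [Sym2.eq_swap]; exact signedAdj_comm.1 h01)
    | (rw [Sym2.eq_swap]; exact signedAdj_comm.1 h12)
    | simp at huv

lemma setOf_isLColoring_pathGraph_three (σ : Sym2 (Fin 3) → ℤˣ) (c₂ : ColorC) :
    {c : ColorC | ∃ φ, IsLColoring (pathGraph 3) σ ![Set.univ, Set.univ, {c₂}] φ ∧ φ 0 = c} =
      {c | ¬SameLayer c c₂ ∨ c.2 = σ s(0, 1) * σ s(1, 2) * c₂.2} := by
  ext c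
  simp only [Set.mem_ofPred_eq, isLColoring_pathGraph_three_iff,
    ← exists_signedAdj_signedAdj_iff]
  constructor
  · rintro ⟨φ, ⟨hL, h01, h12⟩, rfl⟩
    exact ⟨φ 1, h01, (hL 2 : φ 2 = c₂) ▸ h12⟩
  · rintro ⟨d, hcd, hdc₂⟩
    exact ⟨![c, d, c₂], ⟨fun v => by fin_cases v <;> simp, hcd, hdc₂⟩, rfl⟩

lemma isPaired_of_pairC_mem {L : Set ColorC} (h : ∀ c ∈ L, pairC c ∈ L) : IsPaired L :=
  fun c hc => (hc.2 (h c hc.1)).elim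

lemma ncard_setOf_not_sameLayer_or_snd_eq (e : ColorC) (s : ℤˣ) :
    {c : ColorC | ¬SameLayer c e ∨ c.2 = s}.ncard = 10 := by
  simp only [SameLayer]
  rw [Set.ncard_eq_toFinset_card', Set.toFinset_ofPred]
  revert e s
  decide

/-- Lemma 3.3: for a signed path `v v₁ v₂` (vertices `0, 1, 2` of `pathGraph 3`) with
`L(v) = L(v₁) = C` and `L(v₂)` a singleton, the set of admissible colors at `v` (the colors
`c` for which some `L`-coloring assigns `c` to `v`) is a paired 10-set. -/
theorem admissible_path3_paired_ten (σ : Sym2 (Fin 3) → ℤˣ) (c₂ : ColorC) :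
    IsPaired {c : ColorC |
        ∃ φ, IsLColoring (pathGraph 3) σ ![Set.univ, Set.univ, {c₂}] φ ∧ φ 0 = c} ∧
      {c : ColorC |
        ∃ φ, IsLColoring (pathGraph 3) σ ![Set.univ, Set.univ, {c₂}] φ ∧ φ 0 = c}.ncard = 10 := by
  rw [setOf_isLColoring_pathGraph_three]
  exact ⟨isPaired_of_pairC_mem fun _ hc => hc.imp sameLayer_pairFn_left.not.2 id,
    ncard_setOf_not_sameLayer_or_snd_eq _ _⟩
end
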